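/- On ℝ with f(x) = -x²/2 (which is (2,-2)-convex), the curve u(t) = e^t is a 2-curve of maximal slope starting from 1 on [0,∞), and for p' ∈ (1,2) with α = 1 - q'/p' < 0 (q' conjugate to p'), the transformed curve u_{p'}(s) = (1 + αs)^{1/α} is a p'-curve of maximal slope starting from 1 whose maximal interval of existence is [0, -1/α); in particular u_{p'} blows up in finite time (d(u_{p'}(s), u_{p'}(0)) → +∞ as s ↑ -1/α) and cannot be extended to a p'-curve of maximal slope on [0,∞). -/

import Mathlib

open Filter MeasureTheory Set Topology ENNReal NNReal

noncomputable section

variable {S : Type*} [MetricSpace S]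

/-- The metric derivative of a curve `u` at time `t` is `m`. -/
def HasMetricDerivAt (u : ℝ → S) (t m : ℝ) : Prop :=
  Tendsto (fun s => dist (u s) (u t) / |s - t|) (𝓝[≠] t) (𝓝 m)

/-- `v` is an absolutely continuous curve on `I` with (a.e.) metric derivative `dv`,
integrable on `I`, controlling distances. -/
def IsACCurveOn (v : ℝ → S) (I : Set ℝ) (dv : ℝ → ℝ) : Prop :=
  (∀ t ∈ I, 0 ≤ dv t) ∧ IntegrableOn dv I ∧
  (∀ s ∈ I, ∀ t ∈ I, s ≤ t → dist (v s) (v t) ≤ ∫ r in s..t, dv r) ∧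
  (∀ᵐ t ∂(volume.restrict I), HasMetricDerivAt v t (dv t))

/-- The local (descending) slope `|∂⁻ f|`, valued in `ℝ≥0∞`. -/
def slope' (f : S → EReal) (v : S) : ℝ≥0∞ :=
  if f v = ⊤ then ⊤
  else Filter.limsup (fun w => ENNReal.ofReal ((f v - f w).toReal) / edist v w) (𝓝[≠] v)

/-- `g` is a strong upper gradient for `f`. -/
def StrongUpperGradient (f : S → EReal) (g : S → ℝ≥0∞) : Prop :=
  ∀ (I : Set ℝ) (v : ℝ → S) (dv : ℝ → ℝ), IsACCurveOn v I dv →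
    (∀ t ∈ I, f (v t) ≠ ⊤) →
    AEMeasurable (fun t => g (v t)) (volume.restrict I) ∧
    ∀ s ∈ I, ∀ t ∈ I, s ≤ t →
      ENNReal.ofReal |(f (v t)).toReal - (f (v s)).toReal| ≤
        ∫⁻ r in Set.Ioc s t, g (v r) * ENNReal.ofReal (dv r)

/-- The interval `[0, a)` (with `a ∈ (0, ∞]`) as a subset of `ℝ`. -/
def Icoe (a : ℝ≥0∞) : Set ℝ := {t : ℝ | 0 ≤ t ∧ ENNReal.ofReal t < a}

/-- `u` is a `p`-curve of maximal slope for `f` on `[0,a)` starting from `u₀`,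
with metric derivative `du` and non-increasing a.e. representative `φ` of `f ∘ u`. -/
structure IsCMS (f : S → EReal) (p q : ℝ) (a : ℝ≥0∞) (u₀ : S)
    (u : ℝ → S) (du : ℝ → ℝ) (φ : ℝ → ℝ) : Prop where
  init : u 0 = u₀
  dom : f u₀ ≠ ⊤
  ac : ∀ T : ℝ, Set.Icc 0 T ⊆ Icoe a → IsACCurveOn u (Set.Icc 0 T) du
  anti : AntitoneOn φ (Icoe a)
  eq_ae : ∀ᵐ t ∂(volume.restrict (Icoe a)), (φ t : EReal) = f (u t)
  ineq : ∀ᵐ t ∂(volume.restrict (Icoe a)), ∃ φ' : ℝ,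
    HasDerivWithinAt φ φ' (Icoe a) t ∧
    (φ' : EReal) ≤ -(((1/p) * du t ^ p : ℝ) : EReal)
      - (((1/q : ℝ)) : EReal) * ((slope' f (u t) ^ q : ℝ≥0∞) : EReal)

/-- `f` is `(p, λ)`-convex. -/
def PLConvex (f : S → EReal) (p lam : ℝ) : Prop :=
  ∃ ψ : ℝ → ℝ, (∀ t ∈ Set.Icc (0:ℝ) 1, ψ t ∈ Set.Icc (0:ℝ) 1) ∧
    Tendsto ψ (𝓝[>] (0:ℝ)) (𝓝 0) ∧ (∃ t ∈ Set.Ioo (0:ℝ) 1, ψ t < 1) ∧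
    ∀ v₀ v₁ : S, ∃ γ : ℝ → S, ContinuousOn γ (Set.Icc 0 1) ∧ γ 0 = v₀ ∧ γ 1 = v₁ ∧
      (∀ t ∈ Set.Icc (0:ℝ) 1, dist (γ t) (γ 0) ≤ t * dist (γ 1) (γ 0)) ∧
      (∀ t ∈ Set.Icc (0:ℝ) 1,
        f (γ t) ≤ ((1 - t : ℝ) : EReal) * f (γ 0) + ((t : ℝ) : EReal) * f (γ 1)
          - ((lam * t * (1 - ψ t) * dist (γ 0) (γ 1) ^ p : ℝ) : EReal))

/-- The supremum of times at which the slope along `u` is positive. -/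
def tstar (f : S → EReal) (u : ℝ → S) (a : ℝ≥0∞) : ℝ≥0∞ :=
  ⨆ t ∈ {t | t ∈ Icoe a ∧ 0 < slope' f (u t)}, ENNReal.ofReal t

/-!
Since `f = -x²/2` is differentiable with `f' x = -x`, its descending slope is at most `|x|`.
Hence a `C¹` curve `u` in `ℝ` with `f'(u) u' ≤ -(1/p) |u'|^p - (1/q) |f'(u)|^q` is a `p`-curve of
maximal slope, with `|u'|` as metric derivative and `f ∘ u` as energy. For `e^t` with `p = q = 2`,
and for `u(s) = (1 + α s)^(1/α)`, where with `x = 1 + α s` the three quantities `-f'(u) u'`,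
`|u'|^p'` and `|u|^q'` all equal `x^(q'/α)`, this holds with equality since `1/p' + 1/q' = 1`.
As `α < 0`, `u(s) → ∞` when `s ↑ -1/α`; a curve of maximal slope on `[0, ∞)` is absolutely
continuous, hence bounded, on `[0, -1/α]`, so it cannot extend `u`.
-/

lemma Icoe_top : Icoe ⊤ = Ici 0 := by
  ext t; simp [Icoe]

lemma Icoe_ofReal {b : ℝ} (hb : 0 < b) : Icoe (ENNReal.ofReal b) = Ico 0 b := by
  ext t
  simp only [Icoe, mem_ofPred_eq, mem_Ico, ENNReal.ofReal_lt_ofReal_iff hb]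

lemma ordConnected_Icoe (a : ℝ≥0∞) : (Icoe a).OrdConnected :=
  ⟨fun _ hx _ hy _ hz => ⟨hx.1.trans hz.1, (ENNReal.ofReal_le_ofReal hz.2).trans_lt hy.2⟩⟩

lemma HasDerivAt.hasMetricDerivAt {u : ℝ → ℝ} {t m : ℝ} (h : HasDerivAt u m t) :
    HasMetricDerivAt u t |m| :=
  (hasDerivAt_iff_tendsto_slope.mp h).abs.congr fun s => by
    rw [slope_def_field, abs_div, Real.dist_eq]

lemma isACCurveOn_Icc_of_hasDerivAt {u u' : ℝ → ℝ} {a b : ℝ}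
    (hu : ∀ t ∈ Icc a b, HasDerivAt u (u' t) t) (hu' : ContinuousOn u' (Icc a b)) :
    IsACCurveOn u (Icc a b) (fun t => |u' t|) := by
  refine ⟨fun _ _ => abs_nonneg _, hu'.abs.integrableOn_Icc, ?_,
    ae_restrict_of_forall_mem measurableSet_Icc fun t ht => (hu t ht).hasMetricDerivAt⟩
  intro s hs t ht hst
  have hsub : uIcc s t ⊆ Icc a b := uIcc_subset_Icc hs ht
  have hint : IntervalIntegrable u' volume s t := (hu'.mono hsub).intervalIntegrable
  calc dist (u s) (u t) = |∫ r in s..t, u' r| := by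
        rw [intervalIntegral.integral_eq_sub_of_hasDerivAt (fun r hr => hu r (hsub hr)) hint,
          dist_comm, Real.dist_eq]
    _ ≤ ∫ r in s..t, |u' r| := intervalIntegral.abs_integral_le_integral_abs hst

lemma IsACCurveOn.not_tendsto_dist_atTop {v : ℝ → S} {dv : ℝ → ℝ} {a b : ℝ}
    (hv : IsACCurveOn v (Icc a b) dv) (hab : a < b) :
    ¬ Tendsto (fun s => dist (v s) (v a)) (𝓝[<] b) atTop := by
  obtain ⟨hdv, hint, hdist, -⟩ := hv
  have hbound : ∀ s ∈ Icc a b, dist (v s) (v a) ≤ ∫ r in a..b, dv r := by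
    intro s hs
    rw [dist_comm]
    refine (hdist a (left_mem_Icc.2 hab.le) s hs hs.1).trans ?_
    exact intervalIntegral.integral_mono_interval le_rfl hs.1 hs.2
      (ae_restrict_of_forall_mem measurableSet_Ioc fun r hr => hdv r (Ioc_subset_Icc_self hr))
      ((intervalIntegrable_iff_integrableOn_Icc_of_le hab.le).2 hint)
  intro h
  obtain ⟨s, hs, hlarge⟩ := (Eventually.and (Ioo_mem_nhdsLT hab)
    (h.eventually_gt_atTop (∫ r in a..b, dv r))).exists
  exact (hbound s (Ioo_subset_Icc_self hs)).not_gt hlarge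

lemma slope'_coe_le_of_hasDerivAt {g : ℝ → ℝ} {g' x : ℝ} (hg : HasDerivAt g g' x) :
    slope' (fun y => (g y : EReal)) x ≤ ENNReal.ofReal |g'| := by
  rw [slope', if_neg (EReal.coe_ne_top _)]
  have hlim : Tendsto (fun w => ENNReal.ofReal |slope g x w|) (𝓝[≠] x) (𝓝 (ENNReal.ofReal |g'|)) :=
    ENNReal.tendsto_ofReal (hasDerivAt_iff_tendsto_slope.mp hg).abs
  refine (limsup_le_limsup ?_).trans hlim.limsup_eq.le
  filter_upwards [self_mem_nhdsWithin] with w (hw : w ≠ x)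
  have hd : 0 < |x - w| := abs_pos.2 (sub_ne_zero.2 hw.symm)
  rw [← EReal.coe_sub, EReal.toReal_coe, edist_dist, Real.dist_eq, ← ENNReal.ofReal_div_of_pos hd,
    slope_def_field, abs_div, abs_sub_comm w x, abs_sub_comm (g w)]
  exact ENNReal.ofReal_le_ofReal (div_le_div_of_nonneg_right (le_abs_self _) hd.le)

lemma EReal.coe_le_neg_sub_mul_of_le_ofReal {x c r b : ℝ} {A : ℝ≥0∞} (hr : 0 ≤ r) (hb : 0 ≤ b)
    (hA : A ≤ ENNReal.ofReal b) (h : x ≤ -c - r * b) :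
    (x : EReal) ≤ -(c : EReal) - (r : EReal) * (A : EReal) := by
  rw [← EReal.coe_ennreal_toReal (ne_top_of_le_ne_top ENNReal.ofReal_ne_top hA), ← EReal.coe_mul,
    ← EReal.coe_neg, ← EReal.coe_sub, EReal.coe_le_coe_iff]
  nlinarith [ENNReal.toReal_le_of_le_ofReal hb hA]

lemma isCMS_of_hasDerivAt {g g' u u' : ℝ → ℝ} {p q : ℝ} {a : ℝ≥0∞} {u₀ : ℝ}
    (hp : 0 ≤ p) (hq : 0 ≤ q) (h0 : u 0 = u₀)
    (hg : ∀ t ∈ Icoe a, HasDerivAt g (g' (u t)) (u t))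
    (hu : ∀ t ∈ Icoe a, HasDerivAt u (u' t) t) (hu' : ContinuousOn u' (Icoe a))
    (hdiss : ∀ t ∈ Icoe a, g' (u t) * u' t ≤ -(1 / p) * |u' t| ^ p - (1 / q) * |g' (u t)| ^ q) :
    IsCMS (fun x => (g x : EReal)) p q a u₀ u (fun t => |u' t|) (g ∘ u) := by
  have hgu : ∀ t ∈ Icoe a, HasDerivAt (g ∘ u) (g' (u t) * u' t) t :=
    fun t ht => (hg t ht).comp t (hu t ht)
  have hdecr : ∀ t ∈ Icoe a, g' (u t) * u' t ≤ 0 := fun t ht =>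
    (hdiss t ht).trans (by
      linarith [mul_nonneg (one_div_nonneg.2 hp) (Real.rpow_nonneg (abs_nonneg (u' t)) p),
        mul_nonneg (one_div_nonneg.2 hq) (Real.rpow_nonneg (abs_nonneg (g' (u t))) q)])
  have hmeas : MeasurableSet (Icoe a) := (ordConnected_Icoe a).measurableSet
  refine ⟨h0, EReal.coe_ne_top _, fun T hT => isACCurveOn_Icc_of_hasDerivAt
    (fun t ht => hu t (hT ht)) (hu'.mono hT), ?_, Eventually.of_forall fun _ => rfl, ?_⟩
  · exact antitoneOn_of_hasDerivWithinAt_nonpos (ordConnected_Icoe a).convex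
      (fun t ht => (hgu t ht).continuousAt.continuousWithinAt)
      (fun t ht => (hgu t (interior_subset ht)).hasDerivWithinAt)
      (fun t ht => hdecr t (interior_subset ht))
  · refine ae_restrict_of_forall_mem hmeas fun t ht => ⟨_, (hgu t ht).hasDerivWithinAt, ?_⟩
    have hslope : slope' (fun x => (g x : EReal)) (u t) ^ q ≤ ENNReal.ofReal (|g' (u t)| ^ q) :=
      calc slope' (fun x => (g x : EReal)) (u t) ^ q ≤ ENNReal.ofReal |g' (u t)| ^ q :=
            ENNReal.rpow_le_rpow (slope'_coe_le_of_hasDerivAt (hg t ht)) hq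
        _ = ENNReal.ofReal (|g' (u t)| ^ q) := ENNReal.ofReal_rpow_of_nonneg (abs_nonneg _) hq
    exact EReal.coe_le_neg_sub_mul_of_le_ofReal (one_div_nonneg.2 hq)
      (Real.rpow_nonneg (abs_nonneg _) q) hslope (by linarith [hdiss t ht])

lemma hasDerivAt_neg_sq_div_two (x : ℝ) : HasDerivAt (fun x : ℝ => -(x ^ 2) / 2) (-x) x :=
  ((hasDerivAt_pow 2 x).neg.div_const 2).congr_deriv (by ring)

lemma plConvex_neg_sq_div_two : PLConvex (fun x : ℝ => ((-(x ^ 2) / 2 : ℝ) : EReal)) 2 (-2) := by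
  refine ⟨fun _ => 0, fun _ _ => by norm_num, tendsto_const_nhds, ⟨1 / 2, by norm_num, by norm_num⟩,
    fun v₀ v₁ => ⟨fun t => (1 - t) * v₀ + t * v₁, by fun_prop, by simp, by simp, ?_, ?_⟩⟩
  · intro t ht
    simp only [Real.dist_eq]
    rw [show (1 - t) * v₀ + t * v₁ - ((1 - 0) * v₀ + 0 * v₁)
        = t * ((1 - 1) * v₀ + 1 * v₁ - ((1 - 0) * v₀ + 0 * v₁)) by ring,
      abs_mul, abs_of_nonneg ht.1]
  · intro t ht
    rw [← EReal.coe_mul, ← EReal.coe_mul, ← EReal.coe_add, ← EReal.coe_sub, EReal.coe_le_coe_iff,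
      Real.rpow_two, Real.dist_eq, sq_abs]
    nlinarith [mul_nonneg (mul_nonneg ht.1 (by linarith [ht.1] : (0 : ℝ) ≤ 3 + t))
      (sq_nonneg (v₀ - v₁))]

lemma isCMS_exp : IsCMS (fun x : ℝ => ((-(x ^ 2) / 2 : ℝ) : EReal)) 2 2 ⊤ 1 Real.exp
    (fun t => |Real.exp t|) ((fun x : ℝ => -(x ^ 2) / 2) ∘ Real.exp) := by
  refine isCMS_of_hasDerivAt (g' := Neg.neg) (by norm_num) (by norm_num) Real.exp_zero
    (fun t _ => hasDerivAt_neg_sq_div_two _) (fun t _ => Real.hasDerivAt_exp t)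
    Real.continuous_exp.continuousOn fun t _ => ?_
  simp only [abs_neg, abs_of_pos (Real.exp_pos t), Real.rpow_two]
  linarith

lemma one_sub_div_neg_of_one_div_add_one_div_eq_one {p q : ℝ} (hp1 : 1 < p) (hp2 : p < 2)
    (hpq : 1 / p + 1 / q = 1) : 1 - q / p < 0 := by
  have hp0 : 0 < p := one_pos.trans hp1
  have hq0 : 0 < q := one_div_pos.1 (by linarith [(div_lt_one hp0).2 hp1])
  have hsum : p + q = p * q := by field_simp at hpq; linarith
  rw [sub_neg, one_lt_div hp0]
  nlinarith

lemma one_add_mul_pos_of_lt_neg_one_div {α s : ℝ} (hα : α < 0) (hs : s < -1 / α) :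
    0 < 1 + α * s := by
  have := mul_lt_mul_of_neg_left hs hα
  rw [mul_div_cancel₀ _ hα.ne] at this
  linarith

lemma hasDerivAt_one_add_mul_rpow_one_div {α s : ℝ} (hα : α ≠ 0) (hs : 0 < 1 + α * s) :
    HasDerivAt (fun s => (1 + α * s) ^ (1 / α)) ((1 + α * s) ^ (1 / α - 1)) s := by
  have h := ((((hasDerivAt_id' s).const_mul α).const_add 1).rpow_const (p := 1 / α)
    (Or.inl hs.ne'))
  exact h.congr_deriv (by field_simp)

lemma tendsto_one_add_mul_rpow_one_div_atTop {α : ℝ} (hα : α < 0) :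
    Tendsto (fun s => (1 + α * s) ^ (1 / α)) (𝓝[<] (-1 / α)) atTop := by
  have hbase : Tendsto (fun s => 1 + α * s) (𝓝[<] (-1 / α)) (𝓝[>] 0) := by
    refine tendsto_nhdsWithin_of_tendsto_nhds_of_eventually_within _ ?_ ?_
    · have h : Tendsto (fun s => 1 + α * s) (𝓝 (-1 / α)) (𝓝 (1 + α * (-1 / α))) :=
        (continuous_const.add (continuous_const.mul continuous_id)).tendsto _
      rw [mul_div_cancel₀ _ hα.ne, add_neg_cancel] at h
      exact h.mono_left nhdsWithin_le_nhds
    · filter_upwards [self_mem_nhdsWithin] with s hs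
      exact one_add_mul_pos_of_lt_neg_one_div hα hs
  exact (tendsto_rpow_neg_nhdsGT_zero (one_div_neg.2 hα)).comp hbase

lemma isCMS_one_add_mul_rpow_one_div {p q : ℝ} (hp1 : 1 < p) (hp2 : p < 2)
    (hpq : 1 / p + 1 / q = 1) :
    IsCMS (fun x : ℝ => ((-(x ^ 2) / 2 : ℝ) : EReal)) p q (ENNReal.ofReal (-1 / (1 - q / p))) 1
      (fun s => (1 + (1 - q / p) * s) ^ (1 / (1 - q / p)))
      (fun s => |(1 + (1 - q / p) * s) ^ (1 / (1 - q / p) - 1)|)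
      ((fun x : ℝ => -(x ^ 2) / 2) ∘ fun s => (1 + (1 - q / p) * s) ^ (1 / (1 - q / p))) := by
  have hp0 : 0 < p := one_pos.trans hp1
  have hq0 : 0 < q := one_div_pos.1 (by linarith [(div_lt_one hp0).2 hp1])
  have hα := one_sub_div_neg_of_one_div_add_one_div_eq_one hp1 hp2 hpq
  set α := 1 - q / p with hαdef
  have hα0 : α ≠ 0 := hα.ne
  have hsum : p + q = p * q := by field_simp at hpq; linarith
  have hαp : α * p = p - q := by rw [hαdef]; field_simp
  have hexp₁ : (1 / α - 1) * p = q / α := by field_simp; linear_combination -hαp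
  have hexp₂ : 1 / α + (1 / α - 1) = q / α := by
    field_simp
    exact mul_right_cancel₀ hp0.ne' (by linear_combination hsum - hαp)
  have hexp₃ : 1 / α * q = q / α := one_div_mul_eq_div α q
  have hpos : ∀ t ∈ Icoe (ENNReal.ofReal (-1 / α)), 0 < 1 + α * t := by
    rw [Icoe_ofReal (div_pos_of_neg_of_neg (by norm_num) hα)]
    exact fun t ht => one_add_mul_pos_of_lt_neg_one_div hα ht.2
  refine isCMS_of_hasDerivAt (g' := Neg.neg) hp0.le hq0.le (by simp)
    (fun _ _ => hasDerivAt_neg_sq_div_two _)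
    (fun t ht => hasDerivAt_one_add_mul_rpow_one_div hα0 (hpos t ht))
    (fun t ht => ((continuousAt_const.add (continuousAt_const.mul continuousAt_id)).rpow_const
      (Or.inl (hpos t ht).ne')).continuousWithinAt) fun t ht => ?_
  have hx := hpos t ht
  rw [abs_neg, abs_of_pos (Real.rpow_pos_of_pos hx _), abs_of_pos (Real.rpow_pos_of_pos hx _),
    ← Real.rpow_mul hx.le, ← Real.rpow_mul hx.le, neg_mul, ← Real.rpow_add hx, hexp₁, hexp₂, hexp₃]
  linear_combination (1 + α * t) ^ (q / α) * hpq

theorem stmt16 :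
    let f : ℝ → EReal := fun x => ((-(x ^ 2) / 2 : ℝ) : EReal)
    PLConvex f 2 (-2) ∧
    (∃ du φ : ℝ → ℝ, IsCMS f 2 2 ⊤ 1 (fun t => Real.exp t) du φ) ∧
    ∀ p' q' : ℝ, 1 < p' → p' < 2 → 1 / p' + 1 / q' = 1 →
      let α : ℝ := 1 - q' / p'
      let up' : ℝ → ℝ := fun s => (1 + α * s) ^ (1 / α)
      α < 0 ∧
      (∃ du' φ' : ℝ → ℝ, IsCMS f p' q' (ENNReal.ofReal (-1 / α)) 1 up' du' φ') ∧
      Filter.Tendsto (fun s => dist (up' s) (up' 0)) (𝓝[<] (-1 / α)) Filter.atTop ∧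
      ∀ (v : ℝ → ℝ) (dv φv : ℝ → ℝ), IsCMS f p' q' ⊤ 1 v dv φv →
        ¬ (∀ s : ℝ, 0 ≤ s → s < -1 / α → v s = up' s) := by
  intro f
  refine ⟨plConvex_neg_sq_div_two, ⟨_, _, isCMS_exp⟩, fun p' q' hp1 hp2 hpq => ?_⟩
  intro α up'
  have hα : α < 0 := one_sub_div_neg_of_one_div_add_one_div_eq_one hp1 hp2 hpq
  have hT : 0 < -1 / α := div_pos_of_neg_of_neg (by norm_num) hα
  have hblowup : Tendsto (fun s => dist (up' s) (up' 0)) (𝓝[<] (-1 / α)) atTop :=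
    (Metric.tendsto_dist_right_cobounded_atTop _).comp
      ((tendsto_one_add_mul_rpow_one_div_atTop hα).mono_right IsOrderBornology.atTop_le_cobounded)
  refine ⟨hα, ⟨_, _, isCMS_one_add_mul_rpow_one_div hp1 hp2 hpq⟩, hblowup, ?_⟩
  intro v dv φv hv hvu
  refine (hv.ac (-1 / α) (by simp [Icoe_top, Icc_subset_Ici_self])).not_tendsto_dist_atTop hT
    (hblowup.congr' ?_)
  filter_upwards [Ioo_mem_nhdsLT hT] with s hs
  rw [hvu s hs.1.le hs.2, hvu 0 le_rfl hT]
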